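/- arXiv:1503.07076 — 5 statements merged into one kernel-verified Lean document; each statement's English description precedes it below -/
import Mathlib

section
/- For Z as above and the Euclidean carré du champ Γ(f,g) = ∇f·∇g on ℝ², one has Γ(Z,Z) = Z̄ − Z², Γ(Z̄,Z̄) = Z − Z̄², and Γ(Z,Z̄) = (1/2)(1 − ZZ̄). -/
/-!
The plane wave `e_ω(z) = exp (i ω·z)` has gradient `i ω e_ω`, so
`Γ(e_ω, e_ω') = -(ω·ω') e_{ω+ω'}`. For three unit vectors with `ω₁ + ω₂ + ω₃ = 0`, such as
`1, j, j̄`, the Gram matrix is `1` on the diagonal and `-1/2` off it, and `e_{ωₖ} e_{ωₗ} = conj e_{ωₘ}`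
for `{k, l, m} = {1, 2, 3}`. Expanding `Z = (e_{ω₁} + e_{ω₂} + e_{ω₃}) / 3` bilinearly then gives the
three identities; the one for `Z̄` is the one for `Z` applied to `-ω₁, -ω₂, -ω₃`.
-/

open Complex ComplexConjugate

noncomputable section

def planeWave (ω z : ℂ) : ℂ := exp (I * ((conj ω * z).re : ℂ))

def triWave (ω₁ ω₂ ω₃ z : ℂ) : ℂ := (planeWave ω₁ z + planeWave ω₂ z + planeWave ω₃ z) / 3

def partialX (F : ℂ → ℂ) (z : ℂ) : ℂ := deriv (fun s : ℝ => F ((s : ℂ) + (z.im : ℂ) * I)) z.re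

def partialY (F : ℂ → ℂ) (z : ℂ) : ℂ := deriv (fun t : ℝ => F ((z.re : ℂ) + (t : ℂ) * I)) z.im

def carreDuChamp (F G : ℂ → ℂ) (z : ℂ) : ℂ := partialX F z * partialX G z + partialY F z * partialY G z

end

lemma re_conj_mul (ω z : ℂ) : (conj ω * z).re = ω.re * z.re + ω.im * z.im := by
  simp [mul_re]

lemma planeWave_add (ω ω' z : ℂ) : planeWave (ω + ω') z = planeWave ω z * planeWave ω' z := by
  simp only [planeWave, ← exp_add, map_add, add_mul, add_re, ofReal_add, mul_add]

lemma planeWave_mul_planeWave_neg (ω z : ℂ) : planeWave ω z * planeWave (-ω) z = 1 := by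
  rw [← planeWave_add, add_neg_cancel]
  simp [planeWave]

lemma conj_planeWave (ω z : ℂ) : conj (planeWave ω z) = planeWave (-ω) z := by
  simp only [planeWave, ← exp_conj, map_mul, conj_I, conj_ofReal, map_neg, neg_mul, neg_re,
    ofReal_neg, mul_neg]

lemma conj_triWave (ω₁ ω₂ ω₃ z : ℂ) :
    conj (triWave ω₁ ω₂ ω₃ z) = triWave (-ω₁) (-ω₂) (-ω₃) z := by
  simp [triWave, conj_planeWave, map_ofNat]

lemma hasDerivAt_exp_I_mul_affine (a b t : ℝ) :
    HasDerivAt (fun s : ℝ => exp (I * ((a * s + b : ℝ) : ℂ)))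
      (I * a * exp (I * ((a * t + b : ℝ) : ℂ))) t := by
  have h : HasDerivAt (fun s : ℝ => a * s + b) a t := by
    simpa using ((hasDerivAt_id t).const_mul a).add_const b
  simpa [mul_comm, mul_left_comm] using (h.ofReal_comp.const_mul I).cexp

lemma hasDerivAt_planeWave_x (ω z : ℂ) :
    HasDerivAt (fun s : ℝ => planeWave ω ((s : ℂ) + (z.im : ℂ) * I))
      (I * ω.re * planeWave ω z) z.re := by
  simpa [planeWave, re_conj_mul] using hasDerivAt_exp_I_mul_affine ω.re (ω.im * z.im) z.re

lemma hasDerivAt_planeWave_y (ω z : ℂ) :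
    HasDerivAt (fun t : ℝ => planeWave ω ((z.re : ℂ) + (t : ℂ) * I))
      (I * ω.im * planeWave ω z) z.im := by
  simpa [planeWave, re_conj_mul, add_comm] using
    hasDerivAt_exp_I_mul_affine ω.im (ω.re * z.re) z.im

lemma partialX_triWave (ω₁ ω₂ ω₃ z : ℂ) :
    partialX (triWave ω₁ ω₂ ω₃) z =
      I * (ω₁.re * planeWave ω₁ z + ω₂.re * planeWave ω₂ z + ω₃.re * planeWave ω₃ z) / 3 :=
  (((((hasDerivAt_planeWave_x ω₁ z).add (hasDerivAt_planeWave_x ω₂ z)).add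
    (hasDerivAt_planeWave_x ω₃ z)).div_const 3).congr_deriv (by ring)).deriv

lemma partialY_triWave (ω₁ ω₂ ω₃ z : ℂ) :
    partialY (triWave ω₁ ω₂ ω₃) z =
      I * (ω₁.im * planeWave ω₁ z + ω₂.im * planeWave ω₂ z + ω₃.im * planeWave ω₃ z) / 3 :=
  (((((hasDerivAt_planeWave_y ω₁ z).add (hasDerivAt_planeWave_y ω₂ z)).add
    (hasDerivAt_planeWave_y ω₃ z)).div_const 3).congr_deriv (by ring)).deriv

lemma re_sq_add_im_sq_of_norm_eq_one {ω : ℂ} (h : ‖ω‖ = 1) : ω.re ^ 2 + ω.im ^ 2 = 1 := by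
  linear_combination (‖ω‖ + 1) * h - sq_norm_sub_sq_re ω

section UnitTriangle

variable {ω₁ ω₂ ω₃ : ℂ}

lemma re_mul_re_add_im_mul_im_eq_neg_half (hsum : ω₁ + ω₂ + ω₃ = 0)
    (h₁ : ‖ω₁‖ = 1) (h₂ : ‖ω₂‖ = 1) (h₃ : ‖ω₃‖ = 1) :
    ω₁.re * ω₂.re + ω₁.im * ω₂.im = -1 / 2 := by
  have hω₃ : ω₃ = -(ω₁ + ω₂) := by linear_combination hsum
  have h₃' := re_sq_add_im_sq_of_norm_eq_one h₃
  simp only [hω₃, neg_re, neg_im, add_re, add_im] at h₃'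
  linear_combination
    (h₃' - re_sq_add_im_sq_of_norm_eq_one h₁ - re_sq_add_im_sq_of_norm_eq_one h₂) / 2

lemma planeWave_mul_planeWave_eq_conj (hsum : ω₁ + ω₂ + ω₃ = 0) (z : ℂ) :
    planeWave ω₁ z * planeWave ω₂ z = conj (planeWave ω₃ z) := by
  rw [← planeWave_add, conj_planeWave, eq_neg_of_add_eq_zero_left hsum]

variable (hsum : ω₁ + ω₂ + ω₃ = 0) (h₁ : ‖ω₁‖ = 1) (h₂ : ‖ω₂‖ = 1) (h₃ : ‖ω₃‖ = 1)
include hsum h₁ h₂ h₃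

lemma ofReal_gram_eq :
    (ω₁.re : ℂ) ^ 2 + ω₁.im ^ 2 = 1 ∧ (ω₂.re : ℂ) ^ 2 + ω₂.im ^ 2 = 1 ∧
      (ω₃.re : ℂ) ^ 2 + ω₃.im ^ 2 = 1 ∧ (ω₁.re : ℂ) * ω₂.re + ω₁.im * ω₂.im = -1 / 2 ∧
      (ω₂.re : ℂ) * ω₃.re + ω₂.im * ω₃.im = -1 / 2 ∧
      (ω₁.re : ℂ) * ω₃.re + ω₁.im * ω₃.im = -1 / 2 := by
  have hsum₂ : ω₂ + ω₃ + ω₁ = 0 := by linear_combination hsum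
  have hsum₃ : ω₁ + ω₃ + ω₂ = 0 := by linear_combination hsum
  refine ⟨?_, ?_, ?_, ?_, ?_, ?_⟩
  · exact_mod_cast re_sq_add_im_sq_of_norm_eq_one h₁
  · exact_mod_cast re_sq_add_im_sq_of_norm_eq_one h₂
  · exact_mod_cast re_sq_add_im_sq_of_norm_eq_one h₃
  · exact_mod_cast re_mul_re_add_im_mul_im_eq_neg_half hsum h₁ h₂ h₃
  · exact_mod_cast re_mul_re_add_im_mul_im_eq_neg_half hsum₂ h₂ h₃ h₁
  · exact_mod_cast re_mul_re_add_im_mul_im_eq_neg_half hsum₃ h₁ h₃ h₂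

theorem carreDuChamp_triWave_self (z : ℂ) :
    carreDuChamp (triWave ω₁ ω₂ ω₃) (triWave ω₁ ω₂ ω₃) z
      = conj (triWave ω₁ ω₂ ω₃ z) - triWave ω₁ ω₂ ω₃ z ^ 2 := by
  obtain ⟨n₁, n₂, n₃, d₁₂, d₂₃, d₁₃⟩ := ofReal_gram_eq hsum h₁ h₂ h₃
  have hsum₂ : ω₂ + ω₃ + ω₁ = 0 := by linear_combination hsum
  have hsum₃ : ω₁ + ω₃ + ω₂ = 0 := by linear_combination hsum
  have m₁₂ := planeWave_mul_planeWave_eq_conj hsum z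
  have m₂₃ := planeWave_mul_planeWave_eq_conj hsum₂ z
  have m₁₃ := planeWave_mul_planeWave_eq_conj hsum₃ z
  rw [carreDuChamp, partialX_triWave, partialY_triWave, conj_triWave]
  rw [conj_planeWave] at m₁₂ m₂₃ m₁₃
  simp only [triWave]
  set e₁ := planeWave ω₁ z
  set e₂ := planeWave ω₂ z
  set e₃ := planeWave ω₃ z
  linear_combination
    ((ω₁.re * e₁ + ω₂.re * e₂ + ω₃.re * e₃) ^ 2 + (ω₁.im * e₁ + ω₂.im * e₂ + ω₃.im * e₃) ^ 2) / 9
      * I_sq - (e₁ ^ 2 * n₁ + e₂ ^ 2 * n₂ + e₃ ^ 2 * n₃) / 9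
      - 2 * (e₁ * e₂ * d₁₂ + e₂ * e₃ * d₂₃ + e₁ * e₃ * d₁₃) / 9 + (m₁₂ + m₂₃ + m₁₃) / 3

theorem carreDuChamp_triWave_conj (z : ℂ) :
    carreDuChamp (triWave ω₁ ω₂ ω₃) (triWave (-ω₁) (-ω₂) (-ω₃)) z
      = (1 - triWave ω₁ ω₂ ω₃ z * conj (triWave ω₁ ω₂ ω₃ z)) / 2 := by
  obtain ⟨n₁, n₂, n₃, d₁₂, d₂₃, d₁₃⟩ := ofReal_gram_eq hsum h₁ h₂ h₃
  have p₁ := planeWave_mul_planeWave_neg ω₁ z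
  have p₂ := planeWave_mul_planeWave_neg ω₂ z
  have p₃ := planeWave_mul_planeWave_neg ω₃ z
  rw [carreDuChamp, partialX_triWave, partialY_triWave, partialX_triWave, partialY_triWave,
    conj_triWave]
  simp only [triWave, neg_re, neg_im, ofReal_neg]
  set e₁ := planeWave ω₁ z
  set e₂ := planeWave ω₂ z
  set e₃ := planeWave ω₃ z
  set f₁ := planeWave (-ω₁) z
  set f₂ := planeWave (-ω₂) z
  set f₃ := planeWave (-ω₃) z
  linear_combination
    -((ω₁.re * e₁ + ω₂.re * e₂ + ω₃.re * e₃) * (ω₁.re * f₁ + ω₂.re * f₂ + ω₃.re * f₃)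
      + (ω₁.im * e₁ + ω₂.im * e₂ + ω₃.im * e₃) * (ω₁.im * f₁ + ω₂.im * f₂ + ω₃.im * f₃)) / 9
      * I_sq + (e₁ * f₁ * n₁ + e₂ * f₂ * n₂ + e₃ * f₃ * n₃) / 9
      + ((e₁ * f₂ + e₂ * f₁) * d₁₂ + (e₂ * f₃ + e₃ * f₂) * d₂₃ + (e₁ * f₃ + e₃ * f₁) * d₁₃) / 9
      + (p₁ + p₂ + p₃) / 6

theorem carreDuChamp_conj_triWave_self (z : ℂ) :
    carreDuChamp (triWave (-ω₁) (-ω₂) (-ω₃)) (triWave (-ω₁) (-ω₂) (-ω₃)) z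
      = triWave ω₁ ω₂ ω₃ z - conj (triWave ω₁ ω₂ ω₃ z) ^ 2 := by
  have h := carreDuChamp_triWave_self (by linear_combination -hsum : -ω₁ + -ω₂ + -ω₃ = 0)
    (by rwa [norm_neg]) (by rwa [norm_neg]) (by rwa [norm_neg]) z
  rwa [conj_triWave, neg_neg, neg_neg, neg_neg, ← conj_triWave] at h

end UnitTriangle

lemma re_exp_two_pi_I_div_three : (exp (2 * Real.pi * I / 3)).re = -1 / 2 := by
  rw [show 2 * (Real.pi : ℂ) * I / 3 = ((Real.pi - Real.pi / 3 : ℝ) : ℂ) * I by push_cast; ring,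
    exp_ofReal_mul_I_re, Real.cos_pi_sub, Real.cos_pi_div_three]
  norm_num

lemma norm_exp_two_pi_I_div_three : ‖exp (2 * Real.pi * I / 3)‖ = 1 := by
  rw [show 2 * (Real.pi : ℂ) * I / 3 = ((2 * Real.pi / 3 : ℝ) : ℂ) * I by push_cast; ring]
  exact norm_exp_ofReal_mul_I _

lemma one_add_add_conj_eq_zero {j : ℂ} (hj : j.re = -1 / 2) : 1 + j + conj j = 0 :=
  Complex.ext (by norm_num [hj]) (by simp)


/-- For `Z(z) = (1/3)(e^{i(1·z)} + e^{i(j·z)} + e^{i(j̄·z)})` and the Euclidean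
carré du champ `Γ(F,G) = ∂ₓF ∂ₓG + ∂_yF ∂_yG` (extended complex-bilinearly),
one has `Γ(Z,Z) = Z̄ - Z²`, `Γ(Z̄,Z̄) = Z - Z̄²` and `Γ(Z,Z̄) = (1 - ZZ̄)/2`. -/
theorem deltoid_carre_du_champ
    (j : ℂ) (hj : j = Complex.exp (2 * Real.pi * Complex.I / 3))
    (dot : ℂ → ℂ → ℝ) (hdot : ∀ w z : ℂ, dot w z = ((starRingEnd ℂ) w * z).re)
    (Z : ℂ → ℂ)
    (hZ : ∀ z : ℂ, Z z = (Complex.exp (Complex.I * (dot 1 z : ℝ))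
        + Complex.exp (Complex.I * (dot j z : ℝ))
        + Complex.exp (Complex.I * (dot ((starRingEnd ℂ) j) z : ℝ))) / 3)
    (Dx Dy : (ℂ → ℂ) → ℂ → ℂ)
    (hDx : ∀ (F : ℂ → ℂ) (z : ℂ),
      Dx F z = deriv (fun s : ℝ => F ((s : ℂ) + (z.im : ℂ) * Complex.I)) z.re)
    (hDy : ∀ (F : ℂ → ℂ) (z : ℂ),
      Dy F z = deriv (fun t : ℝ => F ((z.re : ℂ) + (t : ℂ) * Complex.I)) z.im)
    (Zb : ℂ → ℂ) (hZb : ∀ z, Zb z = (starRingEnd ℂ) (Z z)) :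
    ∀ z : ℂ,
      (Dx Z z * Dx Z z + Dy Z z * Dy Z z = (starRingEnd ℂ) (Z z) - (Z z) ^ 2) ∧
      (Dx Zb z * Dx Zb z + Dy Zb z * Dy Zb z = Z z - ((starRingEnd ℂ) (Z z)) ^ 2) ∧
      (Dx Z z * Dx Zb z + Dy Z z * Dy Zb z
        = (1 - Z z * (starRingEnd ℂ) (Z z)) / 2) := by
  have hj₁ : ‖j‖ = 1 := hj ▸ norm_exp_two_pi_I_div_three
  have hj₁' : ‖conj j‖ = 1 := by rwa [norm_conj]
  have hsum : 1 + j + conj j = 0 := one_add_add_conj_eq_zero (hj ▸ re_exp_two_pi_I_div_three)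
  have hZ' : Z = triWave 1 j (conj j) := funext fun z => by rw [hZ]; simp only [hdot]; rfl
  have hZb' : Zb = triWave (-1) (-j) (-conj j) := funext fun z => by rw [hZb, hZ', conj_triWave]
  obtain rfl : Dx = partialX := funext fun F => funext (hDx F)
  obtain rfl : Dy = partialY := funext fun F => funext (hDy F)
  subst hZ' hZb'
  intro z
  exact ⟨carreDuChamp_triWave_self hsum norm_one hj₁ hj₁' z,
    carreDuChamp_conj_triWave_self hsum norm_one hj₁ hj₁' z,
    carreDuChamp_triWave_conj hsum norm_one hj₁ hj₁' z⟩
end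

section
/- If z₁, z₂, z₃ are unit complex numbers with z₁z₂z₃ = 1, then (z₁−z₂)²(z₂−z₃)²(z₃−z₁)² is a real number which is ≤ 0. -/
/-! On the unit circle `conj z = z⁻¹`, and `z₁z₂z₃ = 1` turns this into `conj z₁ = z₂z₃` and its
cyclic variants. Substituting these into `w = (z₁ - z₂)(z₂ - z₃)(z₃ - z₁)` gives `conj w = -w`, so
`w` is purely imaginary and the discriminant `w²` is a nonpositive real number. -/

open ComplexConjugate

namespace Complex

theorem conj_eq_of_norm_eq_one_of_mul_eq_one {z w : ℂ} (hz : ‖z‖ = 1) (h : z * w = 1) :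
    conj z = w := by
  rw [← inv_eq_conj hz]
  exact inv_eq_of_mul_eq_one_right h

theorem re_eq_zero_of_conj_eq_neg {w : ℂ} (h : conj w = -w) : w.re = 0 := by
  have := congrArg re h
  rw [conj_re, neg_re] at this
  linarith

theorem sq_im_eq_zero_of_re_eq_zero {w : ℂ} (h : w.re = 0) : (w ^ 2).im = 0 := by
  simp [sq, h]

theorem sq_re_nonpos_of_re_eq_zero {w : ℂ} (h : w.re = 0) : (w ^ 2).re ≤ 0 := by
  simp only [sq, mul_re, h, mul_zero, zero_sub, neg_nonpos]
  exact mul_self_nonneg w.im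

theorem conj_vandermonde_eq_neg_of_norm_eq_one {z₁ z₂ z₃ : ℂ}
    (h1 : ‖z₁‖ = 1) (h2 : ‖z₂‖ = 1) (h3 : ‖z₃‖ = 1) (hprod : z₁ * z₂ * z₃ = 1) :
    conj ((z₁ - z₂) * (z₂ - z₃) * (z₃ - z₁)) = -((z₁ - z₂) * (z₂ - z₃) * (z₃ - z₁)) := by
  have c1 : conj z₁ = z₂ * z₃ :=
    conj_eq_of_norm_eq_one_of_mul_eq_one h1 (by linear_combination hprod)
  have c2 : conj z₂ = z₁ * z₃ :=
    conj_eq_of_norm_eq_one_of_mul_eq_one h2 (by linear_combination hprod)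
  have c3 : conj z₃ = z₁ * z₂ :=
    conj_eq_of_norm_eq_one_of_mul_eq_one h3 (by linear_combination hprod)
  simp only [map_mul, map_sub, c1, c2, c3]
  linear_combination (z₂ - z₁) * (z₃ - z₂) * (z₁ - z₃) * hprod

end Complex

/-- If `z₁, z₂, z₃` are unit complex numbers with `z₁z₂z₃ = 1`, then
`(z₁-z₂)²(z₂-z₃)²(z₃-z₁)²` is a nonpositive real number. -/
theorem discriminant_nonpositive
    (z₁ z₂ z₃ : ℂ)
    (h1 : ‖z₁‖ = 1) (h2 : ‖z₂‖ = 1) (h3 : ‖z₃‖ = 1)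
    (hprod : z₁ * z₂ * z₃ = 1) :
    ((z₁ - z₂) ^ 2 * (z₂ - z₃) ^ 2 * (z₃ - z₁) ^ 2).im = 0 ∧
    ((z₁ - z₂) ^ 2 * (z₂ - z₃) ^ 2 * (z₃ - z₁) ^ 2).re ≤ 0 := by
  have hre : ((z₁ - z₂) * (z₂ - z₃) * (z₃ - z₁)).re = 0 :=
    Complex.re_eq_zero_of_conj_eq_neg
      (Complex.conj_vandermonde_eq_neg_of_norm_eq_one h1 h2 h3 hprod)
  have hsq : (z₁ - z₂) ^ 2 * (z₂ - z₃) ^ 2 * (z₃ - z₁) ^ 2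
      = ((z₁ - z₂) * (z₂ - z₃) * (z₃ - z₁)) ^ 2 := by ring
  rw [hsq]
  exact ⟨Complex.sq_im_eq_zero_of_re_eq_zero hre, Complex.sq_re_nonpos_of_re_eq_zero hre⟩
end

section
/- For the operator L^{(m)} on the unit ball of ℝ^d defined by L^{(m)}(f) = Σᵢⱼ(δᵢⱼ − xᵢxⱼ)∂ᵢ∂ⱼf − m Σᵢ xᵢ∂ᵢf, the function h(x) = (1−‖x‖²)^{−(m−1−d)/2} satisfies L^{(m)}(h) = d(m−d−1)·h on the open unit ball. -/
open Finset

/-!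
Along the `i`-th coordinate line through `x`, `(1 - ‖y‖²)^α` is `t ↦ (q - t²)^α` with
`q = 1 - ‖x‖² + xᵢ²`, so one-variable calculus gives `∂ⱼ h = -2α xⱼ (1 - ‖x‖²)^(α-1)` and
`∂ᵢ∂ⱼ h = -2α δᵢⱼ (1 - ‖x‖²)^(α-1) + 4α(α-1) xᵢxⱼ (1 - ‖x‖²)^(α-2)`. Contracting these with
`δᵢⱼ - xᵢxⱼ` and `xᵢ` leaves a rational expression in `‖x‖²` and `(1 - ‖x‖²)^α`, and for
`2α = d + 1 - m` it collapses to `d(m-d-1) (1 - ‖x‖²)^α`.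
-/

section

variable {ι : Type*} [Fintype ι] [DecidableEq ι]

noncomputable def partialDeriv (i : ι) (f : (ι → ℝ) → ℝ) (x : ι → ℝ) : ℝ :=
  deriv (fun t => f (Function.update x i t)) (x i)

theorem sum_sq_update {R : Type*} [CommRing R] (x : ι → R) (i : ι) (t : R) :
    ∑ k, Function.update x i t k ^ 2 = ∑ k, x k ^ 2 - x i ^ 2 + t ^ 2 := by
  have hsq : ∀ k, Function.update x i t k ^ 2 = Function.update (fun k => x k ^ 2) i (t ^ 2) k :=
    Function.apply_update (fun _ r => r ^ 2) x i t
  rw [Finset.sum_congr rfl fun k _ => hsq k, Finset.sum_update_of_mem (Finset.mem_univ i),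
    Finset.sum_eq_sum_sdiff_singleton_add (Finset.mem_univ i) (fun k => x k ^ 2)]
  ring

theorem hasDerivAt_rpow_sub_sq {q t : ℝ} (β : ℝ) (h : q - t ^ 2 ≠ 0) :
    HasDerivAt (fun s : ℝ => (q - s ^ 2) ^ β) (-2 * t * β * (q - t ^ 2) ^ (β - 1)) t := by
  convert ((hasDerivAt_pow 2 t).const_sub q).rpow_const (p := β) (Or.inl h) using 1
  push_cast
  ring

theorem partialDeriv_rpow_one_sub_sum_sq {x : ι → ℝ} (α : ℝ) (hx : 1 - ∑ k, x k ^ 2 ≠ 0)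
    (j : ι) :
    partialDeriv j (fun y => (1 - ∑ k, y k ^ 2) ^ α) x
      = -2 * α * x j * (1 - ∑ k, x k ^ 2) ^ (α - 1) := by
  have hq : (1 - ∑ k, x k ^ 2 + x j ^ 2) - x j ^ 2 ≠ 0 := by simpa using hx
  have hline : (fun t => (1 - ∑ k, Function.update x j t k ^ 2) ^ α)
      = fun t => ((1 - ∑ k, x k ^ 2 + x j ^ 2) - t ^ 2) ^ α := by
    funext t
    rw [sum_sq_update]
    ring_nf
  rw [partialDeriv, hline, (hasDerivAt_rpow_sub_sq α hq).deriv, add_sub_cancel_right]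
  ring

theorem partialDeriv_partialDeriv_rpow_one_sub_sum_sq {x : ι → ℝ} (α : ℝ)
    (hx : 1 - ∑ k, x k ^ 2 ≠ 0) (i j : ι) :
    partialDeriv i (partialDeriv j (fun y => (1 - ∑ k, y k ^ 2) ^ α)) x
      = (if i = j then -2 * α * (1 - ∑ k, x k ^ 2) ^ (α - 1) else 0)
        + 4 * α * (α - 1) * (1 - ∑ k, x k ^ 2) ^ (α - 2) * (x i * x j) := by
  set q := 1 - ∑ k, x k ^ 2 + x i ^ 2
  have hq : q - x i ^ 2 ≠ 0 := by simpa [q] using hx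
  have hline : (fun t => partialDeriv j (fun y => (1 - ∑ k, y k ^ 2) ^ α)
      (Function.update x i t)) =ᶠ[nhds (x i)]
      fun t => -2 * α * Function.update x i t j * (q - t ^ 2) ^ (α - 1) := by
    have hcont : ContinuousAt (fun t : ℝ => q - t ^ 2) (x i) := by fun_prop
    filter_upwards [hcont.eventually_ne hq] with t ht
    have hsum : 1 - ∑ k, Function.update x i t k ^ 2 = q - t ^ 2 := by
      rw [sum_sq_update]; ring
    rw [partialDeriv_rpow_one_sub_sum_sq α (hsum ▸ ht), hsum]
  have hupdate := hasDerivAt_pi.1 (hasDerivAt_update x i (x i)) j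
  have hderiv : HasDerivAt (fun t => -2 * α * Function.update x i t j * (q - t ^ 2) ^ (α - 1)) _
      (x i) := (hupdate.const_mul (-2 * α)).mul (hasDerivAt_rpow_sub_sq (α - 1) hq)
  rw [partialDeriv, hline.deriv_eq, hderiv.deriv]
  simp only [Function.update_eq_self, Pi.single_apply, q, add_sub_cancel_right,
    show α - 1 - 1 = α - 2 by ring]
  rcases eq_or_ne i j with rfl | hij
  · simp only [if_true]
    ring
  · simp only [if_neg hij, if_neg hij.symm]
    ring

theorem sum_sum_ite_sub_mul_mul_ite_add_mul {R : Type*} [CommRing R] (x : ι → R) (a b : R) :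
    ∑ i, ∑ j, ((if i = j then 1 else 0) - x i * x j) * ((if i = j then a else 0) + b * (x i * x j))
      = Fintype.card ι * a + (b - a) * ∑ i, x i ^ 2 - b * (∑ i, x i ^ 2) ^ 2 := by
  have hterm : ∀ i j, ((if i = j then 1 else 0) - x i * x j) * ((if i = j then a else 0)
      + b * (x i * x j)) = (if i = j then a + (b - a) * x i ^ 2 else 0) - b * x i ^ 2 * x j ^ 2 := by
    intro i j
    split_ifs with hij
    · subst hij; ring
    · ring
  simp only [hterm, Finset.sum_sub_distrib, Finset.sum_ite_eq, Finset.mem_univ, if_true,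
    ← Finset.mul_sum, ← Finset.sum_mul, Finset.sum_add_distrib, Finset.sum_const, Finset.card_univ,
    nsmul_eq_mul]
  ring

end

theorem ball_eigenfunction_general
    (d : ℕ) (m : ℝ)
    (D : Fin d → ((Fin d → ℝ) → ℝ) → (Fin d → ℝ) → ℝ)
    (hD : ∀ i (f : (Fin d → ℝ) → ℝ) (x : Fin d → ℝ),
      D i f x = deriv (fun t => f (Function.update x i t)) (x i))
    (h : (Fin d → ℝ) → ℝ)
    (hh : ∀ x : Fin d → ℝ, h x = (1 - ∑ i, x i ^ 2) ^ (-(m - 1 - d) / 2)) :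
    ∀ x : Fin d → ℝ, (∑ i, x i ^ 2) < 1 →
      (∑ i, ∑ j, ((if i = j then (1 : ℝ) else 0) - x i * x j) * D i (D j h) x)
          - m * ∑ i, x i * D i h x
        = (d : ℝ) * (m - d - 1) * h x := by
  intro x hx
  obtain rfl : D = partialDeriv := funext fun i => funext fun f => funext (hD i f)
  obtain rfl : h = fun y => (1 - ∑ k, y k ^ 2) ^ (-(m - 1 - d) / 2) := funext hh
  set α := -(m - 1 - d) / 2 with hα
  have hs : 1 - ∑ i, x i ^ 2 ≠ 0 := (sub_pos.2 hx).ne'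
  have hfirst : ∀ i, x i * partialDeriv i (fun y => (1 - ∑ k, y k ^ 2) ^ α) x
      = -2 * α * (1 - ∑ k, x k ^ 2) ^ (α - 1) * x i ^ 2 := fun i => by
    rw [partialDeriv_rpow_one_sub_sum_sq α hs]; ring
  simp only [partialDeriv_partialDeriv_rpow_one_sub_sum_sq α hs, sum_sum_ite_sub_mul_mul_ite_add_mul,
    hfirst, ← Finset.mul_sum, Fintype.card_fin]
  simp only [show α - 2 = α - 1 - 1 by ring, Real.rpow_sub_one hs]
  generalize (1 - ∑ k, x k ^ 2) ^ α = P
  field_simp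
  rw [hα]
  ring

/-- For the operator `L^{(m)} f = Σᵢⱼ (δᵢⱼ - xᵢxⱼ) ∂ᵢ∂ⱼ f - m Σᵢ xᵢ ∂ᵢ f` on the unit
ball of `ℝ^d`, the function `h(x) = (1-‖x‖²)^(-(m-1-d)/2)` satisfies
`L^{(m)} h = d(m-d-1) h`. -/
theorem ball_eigenfunction
    (d : ℕ) (hd : 1 ≤ d) (m : ℝ)
    (D : Fin d → ((Fin d → ℝ) → ℝ) → (Fin d → ℝ) → ℝ)
    (hD : ∀ i (f : (Fin d → ℝ) → ℝ) (x : Fin d → ℝ),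
      D i f x = deriv (fun t => f (Function.update x i t)) (x i))
    (h : (Fin d → ℝ) → ℝ)
    (hh : ∀ x : Fin d → ℝ, h x = (1 - ∑ i, x i ^ 2) ^ (-(m - 1 - d) / 2)) :
    ∀ x : Fin d → ℝ, (∑ i, x i ^ 2) < 1 →
      (∑ i, ∑ j, ((if i = j then (1 : ℝ) else 0) - x i * x j) * D i (D j h) x)
          - m * ∑ i, x i * D i h x
        = (d : ℝ) * (m - d - 1) * h x :=
  ball_eigenfunction_general d m D hD h hh
end

section
/- On ℝ^d with the standard carré du champ Γ(f,g) = ∇f·∇g, for P(X) = ∏ᵢ(X − xᵢ) viewed as a function of x = (x₁,…,x_d) for each fixed X, one has Γ(P(X), P(Y)) = (P'(X)P(Y) − P'(Y)P(X))/(Y − X) for all X ≠ Y not equal to any xᵢ, where P' denotes the derivative in the polynomial variable. -/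
/-!
Each `P(X)` is affine in every coordinate `xᵢ`, with slope `-∏_{j ≠ i} (X - xⱼ)`, so
`Γ(P(X), P(Y)) = ∑ᵢ ∏_{j ≠ i} (X - xⱼ) (Y - xⱼ)`. Writing `Y - X = (Y - xᵢ) - (X - xᵢ)` in the
`i`-th term turns it into the `i`-th summand of `P'(X) P(Y) - P'(Y) P(X)`.
-/

open Finset

section Algebra

variable {ι R : Type*} [Fintype ι] [DecidableEq ι] [CommRing R]

theorem sub_mul_sum_prod_erase_mul_prod_erase (x : ι → R) (X Y : R) :
    (Y - X) * ∑ i, (∏ j ∈ univ.erase i, (X - x j)) * ∏ j ∈ univ.erase i, (Y - x j)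
      = (∑ i, ∏ j ∈ univ.erase i, (X - x j)) * ∏ j, (Y - x j)
        - (∑ i, ∏ j ∈ univ.erase i, (Y - x j)) * ∏ j, (X - x j) := by
  rw [mul_sum, sum_mul, sum_mul, ← sum_sub_distrib]
  refine sum_congr rfl fun i _ => ?_
  rw [← mul_prod_erase univ (fun j => X - x j) (mem_univ i),
    ← mul_prod_erase univ (fun j => Y - x j) (mem_univ i)]
  ring

end Algebra

section Calculus

variable {ι 𝕜 : Type*} [Fintype ι] [NontriviallyNormedField 𝕜]

theorem deriv_prod_sub [DecidableEq ι] (x : ι → 𝕜) (s : 𝕜) :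
    deriv (fun s => ∏ j, (s - x j)) s = ∑ i, ∏ j ∈ univ.erase i, (s - x j) := by
  simpa using (HasDerivAt.fun_finsetProd (u := univ) fun i _ =>
    (hasDerivAt_id s).sub_const (x i)).deriv

theorem deriv_prod_sub_update [DecidableEq ι] (x : ι → 𝕜) (Z : 𝕜) (i : ι) (t : 𝕜) :
    deriv (fun t => ∏ j, (Z - Function.update x i t j)) t
      = -∏ j ∈ univ.erase i, (Z - x j) := by
  have h_affine : (fun t => ∏ j, (Z - Function.update x i t j))
      = fun t => (Z - t) * ∏ j ∈ univ.erase i, (Z - x j) := by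
    funext t
    rw [← mul_prod_erase univ _ (mem_univ i), Function.update_self]
    congr 1
    exact prod_congr rfl fun j hj => by rw [Function.update_of_ne (ne_of_mem_erase hj)]
  rw [h_affine]
  simp

end Calculus

theorem gamma_characteristic_polynomial_general
    (d : ℕ) (x : Fin d → ℝ) (X Y : ℝ) (hXY : X ≠ Y) :
    ∑ i, deriv (fun t => ∏ j, (X - Function.update x i t j)) (x i)
        * deriv (fun t => ∏ j, (Y - Function.update x i t j)) (x i)
      = (deriv (fun s => ∏ j, (s - x j)) X * (∏ j, (Y - x j))
          - deriv (fun s => ∏ j, (s - x j)) Y * (∏ j, (X - x j))) / (Y - X) := by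
  simp only [deriv_prod_sub_update, deriv_prod_sub, neg_mul_neg]
  rw [eq_div_iff (sub_ne_zero.mpr hXY.symm), mul_comm]
  exact sub_mul_sum_prod_erase_mul_prod_erase x X Y

/-- On `ℝ^d` with `Γ(f,g) = ∇f·∇g`, for `P(X) = ∏ᵢ (X - xᵢ)` viewed as a function of
`x` for each fixed `X`, one has
`Γ(P(X), P(Y)) = (P'(X)P(Y) - P'(Y)P(X))/(Y-X)`. -/
theorem gamma_characteristic_polynomial
    (d : ℕ) (x : Fin d → ℝ) (X Y : ℝ) (hXY : X ≠ Y)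
    (hX : ∀ i, X ≠ x i) (hY : ∀ i, Y ≠ x i) :
    ∑ i, deriv (fun t => ∏ j, (X - Function.update x i t j)) (x i)
        * deriv (fun t => ∏ j, (Y - Function.update x i t j)) (x i)
      = (deriv (fun s => ∏ j, (s - x j)) X * (∏ j, (Y - x j))
          - deriv (fun s => ∏ j, (s - x j)) Y * (∏ j, (X - x j))) / (Y - X) :=
  gamma_characteristic_polynomial_general d x X Y hXY
end

section
/- For distinct reals x₁ < ⋯ < x_d, with P(X) = ∏ᵢ(X − xᵢ) and D = ∏_{i<j}(xᵢ − xⱼ)², the Euclidean carré du champ in the x-variables satisfies Γ(log P(X), log D) = −P''(X)/P(X) for any X not equal to any xᵢ; equivalently Γ(P(X), log D) = −P''(X). -/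
/-!
Both partial derivatives are logarithmic derivatives of products:
`∂ᵢ log P(X) = -1/(X - xᵢ)` and `∂ᵢ log D = ∑_{j ≠ i} 2/(xᵢ - xⱼ)`.
Grouping `Γ(f, log D)` by pairs gives `∑_{k<j} 2 (∂ₖf - ∂ⱼf)/(xₖ - xⱼ)`, and for `f = log P(X)`
partial fractions turn the pair `{k, j}` into `-2/((X - xₖ)(X - xⱼ))`. Differentiating `P` twice
gives `P''/P = ∑_{i ≠ j} 1/((X - xᵢ)(X - xⱼ))`. The second identity follows from `∂ᵢP = P ∂ᵢ log P`.
-/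

open Finset Function Real

lemma hasDerivAt_update_apply {ι : Type*} [DecidableEq ι] (x : ι → ℝ) (i j : ι) :
    HasDerivAt (fun t => update x i t j) ((Pi.single i 1 : ι → ℝ) j) (x i) :=
  hasDerivAt_pi.1 (hasDerivAt_update x i (x i)) j

section ProdSub

variable {ι : Type*} [DecidableEq ι]

lemma hasDerivAt_prod_sub (x : ι → ℝ) (u : Finset ι) (s : ℝ) :
    HasDerivAt (fun s => ∏ j ∈ u, (s - x j)) (∑ i ∈ u, ∏ j ∈ u.erase i, (s - x j)) s := by
  simpa using HasDerivAt.fun_finsetProd (u := u) (f := fun j s => s - x j)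
    fun j _ => (hasDerivAt_id s).sub_const (x j)

variable [Fintype ι] {x : ι → ℝ} {X : ℝ}

lemma deriv_deriv_prod_sub (hX : ∀ j, X ≠ x j) :
    deriv (deriv fun s => ∏ j, (s - x j)) X
      = (∏ j, (X - x j)) * ∑ i, ∑ j ∈ univ.erase i, (X - x i)⁻¹ * (X - x j)⁻¹ := by
  rw [funext fun s => (hasDerivAt_prod_sub x univ s).deriv,
    (HasDerivAt.fun_sum fun i _ => hasDerivAt_prod_sub x (univ.erase i) X).deriv, mul_sum]
  refine sum_congr rfl fun i _ => ?_
  rw [mul_sum]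
  refine sum_congr rfl fun j hj => ?_
  have hi := sub_ne_zero.2 (hX i)
  have hj' := sub_ne_zero.2 (hX j)
  rw [← mul_prod_erase univ (fun k => X - x k) (mem_univ i), ← mul_prod_erase _ _ hj]
  field_simp

lemma deriv_log_prod_sub_update (hX : ∀ j, X ≠ x j) (i : ι) :
    deriv (fun t => log (∏ j, (X - update x i t j))) (x i) = -(X - x i)⁻¹ := by
  have hdiff : ∀ j, HasDerivAt (fun t => X - update x i t j) (-(Pi.single i 1 : ι → ℝ) j) (x i) :=
    fun j => (hasDerivAt_update_apply x i j).const_sub X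
  have hne : ∀ j, X - update x i (x i) j ≠ 0 := fun j => by simpa [sub_eq_zero] using hX j
  rw [deriv.log (DifferentiableAt.fun_finsetProd fun j _ => (hdiff j).differentiableAt)
      (prod_ne_zero_iff.2 fun j _ => hne j), ← logDeriv_apply,
    logDeriv_prod (f := fun j t => X - update x i t j) (fun j _ => hne j)
      (fun j _ => (hdiff j).differentiableAt)]
  simp [logDeriv_apply, (hdiff _).deriv, Pi.single_apply, neg_div, ite_div]

end ProdSub

section Discriminant

variable {ι : Type*} [Fintype ι] [LinearOrder ι]

lemma sum_sum_erase_eq_sum_sum_filter_lt {M : Type*} [AddCommMonoid M] (F : ι → ι → M) :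
    ∑ i, ∑ j ∈ univ.erase i, F i j = ∑ i, ∑ j ∈ univ.filter (i < ·), (F i j + F j i) := by
  have hsplit : ∀ i : ι, univ.erase i = univ.filter (i < ·) ∪ univ.filter (· < i) := fun i => by
    ext j
    simp only [mem_erase, mem_union, mem_filter, mem_univ, true_and, and_true]
    exact ne_comm.trans lt_or_lt_iff_ne.symm
  have hswap : ∑ i, ∑ j ∈ univ.filter (· < i), F i j = ∑ i, ∑ j ∈ univ.filter (i < ·), F j i :=
    sum_comm' (by simp)
  simp_rw [sum_add_distrib, hsplit, sum_union (disjoint_filter.2 fun j _ h h' => lt_asymm h h'),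
    sum_add_distrib, hswap]

def discriminant (y : ι → ℝ) : ℝ :=
  ∏ i, ∏ j ∈ univ.filter (i < ·), (y i - y j) ^ 2

variable {x : ι → ℝ}

lemma deriv_log_discriminant_update (hx : Injective x) (i : ι) :
    deriv (fun t => log (discriminant (update x i t))) (x i)
      = ∑ k, ∑ j ∈ univ.filter (k < ·),
          2 * ((Pi.single i 1 : ι → ℝ) k - (Pi.single i 1 : ι → ℝ) j) / (x k - x j) := by
  have hdiff : ∀ k j, HasDerivAt (fun t => update x i t k - update x i t j)
      ((Pi.single i 1 : ι → ℝ) k - (Pi.single i 1 : ι → ℝ) j) (x i) := fun k j =>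
    (hasDerivAt_update_apply x i k).sub (hasDerivAt_update_apply x i j)
  have hne : ∀ k, ∀ j ∈ univ.filter (k < ·), (update x i (x i) k - update x i (x i) j) ^ 2 ≠ 0 :=
    fun k j hj => by simpa [sub_eq_zero] using hx.ne (mem_filter.1 hj).2.ne
  have hinner_ne : ∀ k,
      ∏ j ∈ univ.filter (k < ·), (update x i (x i) k - update x i (x i) j) ^ 2 ≠ 0 :=
    fun k => prod_ne_zero_iff.2 (hne k)
  have hinner_diff : ∀ k, DifferentiableAt ℝ
      (fun t => ∏ j ∈ univ.filter (k < ·), (update x i t k - update x i t j) ^ 2) (x i) :=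
    fun k => DifferentiableAt.fun_finsetProd fun j _ => (hdiff k j).differentiableAt.pow 2
  unfold discriminant
  rw [deriv.log (DifferentiableAt.fun_finsetProd fun k _ => hinner_diff k)
      (prod_ne_zero_iff.2 fun k _ => hinner_ne k), ← logDeriv_apply,
    logDeriv_prod (f := fun k t => ∏ j ∈ univ.filter (k < ·), (update x i t k - update x i t j) ^ 2)
      (fun k _ => hinner_ne k) (fun k _ => hinner_diff k)]
  refine sum_congr rfl fun k _ => ?_
  rw [logDeriv_prod (f := fun j t => (update x i t k - update x i t j) ^ 2) (hne k)
    (fun j _ => (hdiff k j).differentiableAt.pow 2)]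
  refine sum_congr rfl fun j _ => ?_
  rw [logDeriv_fun_pow (hdiff k j).differentiableAt, logDeriv_apply, (hdiff k j).deriv]
  simp only [update_eq_self]
  push_cast
  ring

lemma sum_mul_deriv_log_discriminant_update (hx : Injective x) (c : ι → ℝ) :
    ∑ i, c i * deriv (fun t => log (discriminant (update x i t))) (x i)
      = ∑ k, ∑ j ∈ univ.filter (k < ·), 2 * (c k - c j) / (x k - x j) := by
  have hc : ∀ k, ∑ i, c i * (Pi.single i 1 : ι → ℝ) k = c k := fun k => by
    simp [Pi.single_apply]
  simp_rw [deriv_log_discriminant_update hx, mul_sum]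
  rw [sum_comm]
  refine sum_congr rfl fun k _ => ?_
  rw [sum_comm]
  refine sum_congr rfl fun j _ => ?_
  rw [← hc k, ← hc j, ← sum_sub_distrib, mul_sum, sum_div]
  exact sum_congr rfl fun i _ => by ring

lemma sum_deriv_log_prod_sub_mul_deriv_log_discriminant (hx : Injective x) {X : ℝ}
    (hX : ∀ j, X ≠ x j) :
    ∑ i, deriv (fun t => log (∏ j, (X - update x i t j))) (x i)
        * deriv (fun t => log (discriminant (update x i t))) (x i)
      = -∑ i, ∑ j ∈ univ.erase i, (X - x i)⁻¹ * (X - x j)⁻¹ := by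
  simp_rw [deriv_log_prod_sub_update hX, sum_mul_deriv_log_discriminant_update hx,
    sum_sum_erase_eq_sum_sum_filter_lt, ← sum_neg_distrib]
  refine sum_congr rfl fun k _ => sum_congr rfl fun j hj => ?_
  have hk := sub_ne_zero.2 (hX k)
  have hj' := sub_ne_zero.2 (hX j)
  have hkj := sub_ne_zero.2 (hx.ne (mem_filter.1 hj).2.ne)
  field_simp
  ring

end Discriminant

/-- For distinct reals `x₁ < ⋯ < x_d`, `P(X) = ∏ᵢ (X - xᵢ)` and the discriminant
`D = ∏_{i<j} (xᵢ - xⱼ)²`, one has `Γ(log P(X), log D) = -P''(X)/P(X)`, equivalently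
`Γ(P(X), log D) = -P''(X)`, where `Γ` is the Euclidean carré du champ in `x`. -/
theorem gamma_log_discriminant
    (d : ℕ) (x : Fin d → ℝ) (hmono : ∀ i j : Fin d, i < j → x i < x j)
    (X : ℝ) (hX : ∀ i, X ≠ x i)
    (P : ℝ → ℝ) (hP : ∀ s : ℝ, P s = ∏ j, (s - x j))
    (Dd : (Fin d → ℝ) → ℝ)
    (hDd : ∀ y : Fin d → ℝ,
      Dd y = ∏ i, ∏ j ∈ Finset.univ.filter (fun j => i < j), (y i - y j) ^ 2) :
    (∑ i, deriv (fun t => Real.log (∏ j, (X - Function.update x i t j))) (x i)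
        * deriv (fun t => Real.log (Dd (Function.update x i t))) (x i)
      = - deriv (deriv P) X / P X) ∧
    (∑ i, deriv (fun t => ∏ j, (X - Function.update x i t j)) (x i)
        * deriv (fun t => Real.log (Dd (Function.update x i t))) (x i)
      = - deriv (deriv P) X) := by
  obtain rfl : Dd = discriminant := funext hDd
  obtain rfl : P = fun s => ∏ j, (s - x j) := funext hP
  have hgamma := sum_deriv_log_prod_sub_mul_deriv_log_discriminant (StrictMono.injective hmono) hX
  have hPX : ∏ j, (X - x j) ≠ 0 := prod_ne_zero_iff.2 fun j _ => sub_ne_zero.2 (hX j)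
  have hdP : ∀ i, deriv (fun t => ∏ j, (X - update x i t j)) (x i)
      = (∏ j, (X - x j)) * deriv (fun t => log (∏ j, (X - update x i t j))) (x i) := fun i => by
    have hdiff : DifferentiableAt ℝ (fun t => ∏ j, (X - update x i t j)) (x i) :=
      DifferentiableAt.fun_finsetProd fun j _ =>
        ((hasDerivAt_update_apply x i j).const_sub X).differentiableAt
    rw [deriv.log hdiff (by simpa using hPX)]
    simp only [update_eq_self]
    field_simp
  refine ⟨?_, ?_⟩
  · rw [hgamma, deriv_deriv_prod_sub hX]
    field_simp
  · simp_rw [hdP, mul_assoc, ← mul_sum, hgamma, deriv_deriv_prod_sub hX]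
    ring
end
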